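/- If the quadruple (λ,λ',γ,γ') of nonnegative reals is D-feasible, then 𝒟_{123}(λ,λ',γ,γ') = 𝒟̄_{123}(λ,λ',γ,γ'); that is, eliminating the auxiliary rate-splitting variables from the SLS achievable region yields exactly the explicit polyhedral region 𝒟̄_{123}(λ,λ',γ,γ'). -/
import Mathlib


/-- The SLS achievable region `𝒟₁₂₃(λ,λ',γ,γ')` with auxiliary rate-splitting
variables (indices `0,1,2` stand for users `1,2,3`). -/
def D123 (α : Fin 3 → Fin 3 → ℝ) (l l' g g' : ℝ) : Set (Fin 3 → ℝ) :=
  { d | ∃ e1 e2 e3 e12 e123 μ1 μ2 ξ1 ξ2 ξ3 : ℝ,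
      0 ≤ e1 ∧ 0 ≤ e2 ∧ 0 ≤ e3 ∧ 0 ≤ e12 ∧ 0 ≤ e123 ∧
      0 ≤ μ1 ∧ 0 ≤ μ2 ∧ 0 ≤ ξ1 ∧ 0 ≤ ξ2 ∧ 0 ≤ ξ3 ∧
      μ1 + μ2 = 1 ∧ ξ1 + ξ2 + ξ3 = 1 ∧
      d 0 = e1 + μ1 * e12 + ξ1 * e123 ∧
      d 1 = e2 + μ2 * e12 + ξ2 * e123 ∧
      d 2 = e3 + ξ3 * e123 ∧
      e1 ≤ α 0 0 - l - l' - g - g' ∧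
      e2 ≤ α 1 1 - l - l' ∧
      e3 ≤ α 2 2 - l ∧
      e12 ≤ l' ∧ e123 ≤ l }

/-- The explicit polyhedral region `𝒟̄₁₂₃(λ,λ',γ,γ')`. -/
def Dbar123 (α : Fin 3 → Fin 3 → ℝ) (l l' g g' : ℝ) : Set (Fin 3 → ℝ) :=
  { d | 0 ≤ d 0 ∧ 0 ≤ d 1 ∧ 0 ≤ d 2 ∧
        d 0 ≤ α 0 0 - g - g' ∧ d 1 ≤ α 1 1 ∧ d 2 ≤ α 2 2 ∧
        d 0 + d 1 ≤ α 0 0 + α 1 1 - l - l' - g - g' ∧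
        d 0 + d 2 ≤ α 0 0 + α 2 2 - l - g - g' ∧
        d 1 + d 2 ≤ α 1 1 + α 2 2 - l ∧
        d 0 + d 1 + d 2 ≤ α 0 0 + α 1 1 + α 2 2 - 2 * l - l' - g - g' }

/-- D-feasibility of the power-control quadruple `(λ,λ',γ,γ')`. -/
def DFeasible (α : Fin 3 → Fin 3 → ℝ) (l l' g g' : ℝ) : Prop :=
  0 ≤ l ∧ 0 ≤ l' ∧ 0 ≤ g ∧ 0 ≤ g' ∧
  l + l' + g + g' ≤ α 0 0 ∧ l + l' ≤ α 1 1 ∧ l ≤ α 2 2 ∧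
  α 0 1 ≤ l + l' + g ∧ α 0 2 ≤ l + g ∧ α 1 0 ≤ l + l' + g' ∧
  α 1 2 ≤ l ∧ α 2 0 ≤ l + g' ∧ α 2 1 ≤ l

private lemma split2' (z1 z2 : ℝ) (h1 : 0 ≤ z1) (h2 : 0 ≤ z2) :
    ∃ μ1 μ2 : ℝ, 0 ≤ μ1 ∧ 0 ≤ μ2 ∧ μ1 + μ2 = 1 ∧
      μ1 * (z1 + z2) = z1 ∧ μ2 * (z1 + z2) = z2 := by
  by_cases h : z1 + z2 = 0
  · have hz1 : z1 = 0 := by linarith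
    have hz2 : z2 = 0 := by linarith
    exact ⟨1, 0, by norm_num, le_refl 0, by norm_num,
      by rw [h, hz1]; ring, by rw [h, hz2]; ring⟩
  · have hS : 0 < z1 + z2 := lt_of_le_of_ne (by linarith) (Ne.symm h)
    refine ⟨z1 / (z1 + z2), z2 / (z1 + z2), div_nonneg h1 hS.le,
      div_nonneg h2 hS.le, ?_, ?_, ?_⟩ <;> field_simp

private lemma split3' (y1 y2 y3 : ℝ) (h1 : 0 ≤ y1) (h2 : 0 ≤ y2) (h3 : 0 ≤ y3) :
    ∃ ξ1 ξ2 ξ3 : ℝ, 0 ≤ ξ1 ∧ 0 ≤ ξ2 ∧ 0 ≤ ξ3 ∧ ξ1 + ξ2 + ξ3 = 1 ∧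
      ξ1 * (y1 + y2 + y3) = y1 ∧ ξ2 * (y1 + y2 + y3) = y2 ∧
      ξ3 * (y1 + y2 + y3) = y3 := by
  by_cases h : y1 + y2 + y3 = 0
  · have hz1 : y1 = 0 := by linarith
    have hz2 : y2 = 0 := by linarith
    have hz3 : y3 = 0 := by linarith
    exact ⟨1, 0, 0, by norm_num, le_refl 0, le_refl 0, by norm_num,
      by rw [h, hz1]; ring, by rw [h, hz2]; ring, by rw [h, hz3]; ring⟩
  · have hS : 0 < y1 + y2 + y3 := lt_of_le_of_ne (by linarith) (Ne.symm h)
    refine ⟨y1 / (y1 + y2 + y3), y2 / (y1 + y2 + y3), y3 / (y1 + y2 + y3),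
      div_nonneg h1 hS.le, div_nonneg h2 hS.le, div_nonneg h3 hS.le,
      ?_, ?_, ?_, ?_⟩ <;> field_simp <;> ring

/-- For a D-feasible quadruple, eliminating the auxiliary variables from the SLS
achievable region `𝒟₁₂₃` yields exactly the polyhedral region `𝒟̄₁₂₃`. -/
theorem D123_eq_Dbar123 (α : Fin 3 → Fin 3 → ℝ)
    (hα : ∀ i m : Fin 3, 0 ≤ α i m)
    (l l' g g' : ℝ) (hfeas : DFeasible α l l' g g') :
    D123 α l l' g g' = Dbar123 α l l' g g' := by
  obtain ⟨hl, hl', hg, hg', hf1, hf2, hf3, _, _, _, _, _, _⟩ := hfeas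
  ext d
  constructor
  · rintro ⟨e1, e2, e3, e12, e123, μ1, μ2, ξ1, ξ2, ξ3,
      he1, he2, he3, he12, he123, hμ1, hμ2, hξ1, hξ2, hξ3,
      hμ, hξ, hd0, hd1, hd2, hb1, hb2, hb3, hb12, hb123⟩
    have p1 : 0 ≤ μ1 * e12 := mul_nonneg hμ1 he12
    have p2 : 0 ≤ μ2 * e12 := mul_nonneg hμ2 he12
    have q1 : 0 ≤ ξ1 * e123 := mul_nonneg hξ1 he123
    have q2 : 0 ≤ ξ2 * e123 := mul_nonneg hξ2 he123
    have q3 : 0 ≤ ξ3 * e123 := mul_nonneg hξ3 he123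
    have psum : μ1 * e12 + μ2 * e12 = e12 := by
      have : (μ1 + μ2) * e12 = e12 := by rw [hμ]; ring
      linarith [this]
    have qsum : ξ1 * e123 + ξ2 * e123 + ξ3 * e123 = e123 := by
      have : (ξ1 + ξ2 + ξ3) * e123 = e123 := by rw [hξ]; ring
      linarith [this]
    refine ⟨by linarith, by linarith, by linarith, by linarith, by linarith,
      by linarith, by linarith, by linarith, by linarith, by linarith⟩
  · rintro ⟨hd0, hd1, hd2, hc1, hc2, hc3, hc12, hc13, hc23, hc123⟩
    set A1 := α 0 0 - l - l' - g - g' with hA1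
    set A2 := α 1 1 - l - l' with hA2
    set A3 := α 2 2 - l with hA3
    have hA1n : 0 ≤ A1 := by simp [hA1]; linarith
    have hA2n : 0 ≤ A2 := by simp [hA2]; linarith
    have hA3n : 0 ≤ A3 := by simp [hA3]; linarith
    set s1 := max 0 (d 0 - A1) with hs1
    set s2 := max 0 (d 1 - A2) with hs2
    set s3 := max 0 (d 2 - A3) with hs3
    have hs1n : 0 ≤ s1 := le_max_left _ _
    have hs2n : 0 ≤ s2 := le_max_left _ _
    have hs3n : 0 ≤ s3 := le_max_left _ _
    have hs1l : d 0 - A1 ≤ s1 := le_max_right _ _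
    have hs2l : d 1 - A2 ≤ s2 := le_max_right _ _
    have hs3l : d 2 - A3 ≤ s3 := le_max_right _ _
    have hs1d : s1 ≤ d 0 := max_le hd0 (by linarith)
    have hs2d : s2 ≤ d 1 := max_le hd1 (by linarith)
    have hs3d : s3 ≤ d 2 := max_le hd2 (by linarith)
    have hs3b : s3 ≤ l := max_le hl (by simp [hA3]; linarith)
    have hsum : s1 + s2 + s3 ≤ l + l' := by
      rcases max_cases 0 (d 0 - A1) with ⟨hx1, _⟩ | ⟨hx1, _⟩ <;>
      rcases max_cases 0 (d 1 - A2) with ⟨hx2, _⟩ | ⟨hx2, _⟩ <;>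
      rcases max_cases 0 (d 2 - A3) with ⟨hx3, _⟩ | ⟨hx3, _⟩ <;>
      rw [hs1, hs2, hs3, hx1, hx2, hx3] <;> simp [hA1, hA2, hA3] <;> linarith
    set T := max 0 (s1 + s2 - l') with hT
    have hTn : 0 ≤ T := le_max_left _ _
    have hTl : s1 + s2 - l' ≤ T := le_max_right _ _
    have hTu : T ≤ s1 + s2 := max_le (by linarith) (by linarith)
    have hTb : T + s3 ≤ l := by
      rcases max_cases 0 (s1 + s2 - l') with ⟨hx, _⟩ | ⟨hx, _⟩ <;>
        rw [hT, hx] <;> linarith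
    set y1 := min s1 T with hy1
    set y2 := T - y1 with hy2
    have hy1n : 0 ≤ y1 := le_min hs1n hTn
    have hy1s : y1 ≤ s1 := min_le_left _ _
    have hy1T : y1 ≤ T := min_le_right _ _
    have hy2n : 0 ≤ y2 := by simp [hy2]; linarith
    have hy2s : y2 ≤ s2 := by
      rcases min_cases s1 T with ⟨hx, _⟩ | ⟨hx, _⟩ <;>
        rw [hy2, hy1, hx] <;> linarith
    obtain ⟨ξ1, ξ2, ξ3, hξ1, hξ2, hξ3, hξs, hξe1, hξe2, hξe3⟩ :=
      split3' y1 y2 s3 hy1n hy2n hs3n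
    obtain ⟨μ1, μ2, hμ1, hμ2, hμs, hμe1, hμe2⟩ :=
      split2' (s1 - y1) (s2 - y2) (by linarith) (by linarith)
    refine ⟨d 0 - s1, d 1 - s2, d 2 - s3, (s1 - y1) + (s2 - y2), y1 + y2 + s3,
      μ1, μ2, ξ1, ξ2, ξ3, by linarith, by linarith, by linarith, by linarith,
      by linarith, hμ1, hμ2, hξ1, hξ2, hξ3, hμs, hξs,
      by rw [hμe1, hξe1]; ring, by rw [hμe2, hξe2]; ring, by rw [hξe3]; ring,
      by linarith, by linarith, by linarith, by linarith, by linarith⟩
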